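/- arXiv:1203.1122 — 7 statements merged into one kernel-verified Lean document; each statement's English description precedes it below -/
import Mathlib

section
/- Let p be a prime and n a positive integer. The function u_0 : Z_{p^n} → Z_{p^n} defined by u_0(x) = 1 if p divides x (i.e., x lies in the ideal of Z_{p^n} generated by p) and u_0(x) = 0 otherwise, is a polynomial function. -/
/-!
Every `x ∈ (p)` satisfies `x ^ n = 0` in `ZMod (p ^ n)`, while every `x ∉ (p)` is a unit and so
satisfies `x ^ φ(p ^ n) = 1` by Euler's theorem. Hence `u₀` is evaluation of `1 - X ^ (n * φ(p ^ n))`.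
-/

open Polynomial

theorem pow_eq_zero_of_mem_span_singleton {R : Type*} [CommSemiring R] {a x : R} {n : ℕ}
    (ha : a ^ n = 0) (hx : x ∈ Ideal.span {a}) : x ^ n = 0 := by
  obtain ⟨c, rfl⟩ := Ideal.mem_span_singleton'.1 hx
  rw [mul_pow, ha, mul_zero]

namespace ZMod

theorem pow_totient_of_isUnit {m : ℕ} {x : ZMod m} (hx : IsUnit x) : x ^ m.totient = 1 := by
  obtain ⟨u, rfl⟩ := hx
  rw [← Units.val_pow_eq_pow_val, pow_totient, Units.val_one]

theorem isUnit_of_notMem_span_prime {p n : ℕ} (hp : p.Prime) {x : ZMod (p ^ n)}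
    (hx : x ∉ Ideal.span {(p : ZMod (p ^ n))}) : IsUnit x := by
  have : NeZero (p ^ n) := ⟨pow_ne_zero n hp.ne_zero⟩
  have hval : ((x.val : ℕ) : ZMod (p ^ n)) = x := natCast_zmod_val x
  have hndvd : ¬ p ∣ x.val := by
    rintro ⟨c, hc⟩
    refine hx (Ideal.mem_span_singleton.2 ⟨c, ?_⟩)
    rw [← hval, hc, Nat.cast_mul]
  rw [← hval, isUnit_iff_coprime]
  exact (hp.coprime_iff_not_dvd.2 hndvd).symm.pow_right n

end ZMod

open scoped Classical in
theorem u0_is_poly_fun_general (p n : ℕ) (hp : p.Prime) :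
    ∃ g : Polynomial (ZMod (p ^ n)), ∀ x : ZMod (p ^ n),
      (if x ∈ Ideal.span {(p : ZMod (p ^ n))} then (1 : ZMod (p ^ n)) else 0) = g.eval x := by
  refine ⟨1 - X ^ (n * (p ^ n).totient), fun x => ?_⟩
  rw [eval_sub, eval_one, eval_pow, eval_X]
  split_ifs with hx
  · have hpn : (p : ZMod (p ^ n)) ^ n = 0 := by rw [← Nat.cast_pow, ZMod.natCast_self]
    have hφ : (p ^ n).totient ≠ 0 := (Nat.totient_pos.2 (pow_pos hp.pos n)).ne'
    rw [pow_mul, pow_eq_zero_of_mem_span_singleton hpn hx, zero_pow hφ, sub_zero]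
  · rw [mul_comm, pow_mul, ZMod.pow_totient_of_isUnit (ZMod.isUnit_of_notMem_span_prime hp hx),
      one_pow, sub_self]

open scoped Classical in
theorem u0_is_poly_fun (p n : ℕ) (hp : p.Prime) (hn : 0 < n) :
    ∃ g : Polynomial (ZMod (p ^ n)), ∀ x : ZMod (p ^ n),
      (if x ∈ Ideal.span {(p : ZMod (p ^ n))} then (1 : ZMod (p ^ n)) else 0) = g.eval x :=
  u0_is_poly_fun_general p n hp
end

section
/- Let p be a prime and n a positive integer. A function f : Z_{p^n} → Z_{p^n} is a polynomial function if and only if f lies in the Z_{p^n}-submodule of the module of all functions Z_{p^n} → Z_{p^n} generated by the functions u_k^{<j>} for 0 ≤ k ≤ n−1 and j in Z_{p^n}, where u_k(x) = x^k if p divides x and u_k(x) = 0 otherwise, and u_k^{<j>}(i) = u_k(i + j). -/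
open scoped Classical
open Finset Polynomial

namespace PolyFunAux


noncomputable def psi (p n : ℕ) (hn : 0 < n) : ZMod (p ^ n) →+* ZMod p :=
  ZMod.castHom (dvd_pow_self p hn.ne') (ZMod p)

lemma dvd_iff {p n : ℕ} (hp : p.Prime) (hn : 0 < n) (a : ZMod (p ^ n)) :
    (p : ZMod (p ^ n)) ∣ a ↔ psi p n hn a = 0 := by
  haveI : NeZero (p ^ n) := ⟨pow_ne_zero n hp.ne_zero⟩
  constructor
  · rintro ⟨b, rfl⟩
    have hp0 : psi p n hn (p : ZMod (p ^ n)) = 0 := by simp [psi, map_natCast]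
    rw [map_mul, hp0, zero_mul]
  · intro h
    have ha : a = ((a.val : ℕ) : ZMod (p ^ n)) := (ZMod.natCast_zmod_val a).symm
    have h1 : ((a.val : ℕ) : ZMod p) = 0 := by
      rw [ha] at h; simpa [psi, map_natCast] using h
    obtain ⟨c, hc⟩ := (ZMod.natCast_eq_zero_iff _ _).mp h1
    exact ⟨(c : ZMod (p ^ n)), by rw [ha, hc]; push_cast; ring⟩

lemma pow_eq_zero_of_le {p n : ℕ} (hp : p.Prime) {a : ZMod (p ^ n)}
    (ha : (p : ZMod (p ^ n)) ∣ a) {k : ℕ} (hk : n ≤ k) : a ^ k = 0 := by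
  obtain ⟨b, rfl⟩ := ha
  have hpn : ((p : ZMod (p ^ n))) ^ n = 0 := by
    rw [← Nat.cast_pow, ZMod.natCast_self]
  have hk' : (p : ZMod (p ^ n)) ^ k = (p : ZMod (p ^ n)) ^ n * (p : ZMod (p ^ n)) ^ (k - n) := by
    rw [← pow_add, Nat.add_sub_cancel' hk]
  rw [mul_pow, hk', hpn, zero_mul, zero_mul]

lemma indicator {p n : ℕ} (hp : p.Prime) (hn : 0 < n) (a : ZMod (p ^ n)) :
    (1 : ZMod (p ^ n)) - a ^ (n * Nat.totient (p ^ n)) =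
      if (p : ZMod (p ^ n)) ∣ a then 1 else 0 := by
  haveI : NeZero (p ^ n) := ⟨pow_ne_zero n hp.ne_zero⟩
  by_cases h : (p : ZMod (p ^ n)) ∣ a
  · rw [if_pos h, pow_eq_zero_of_le hp h (Nat.le_mul_of_pos_right n
      (Nat.totient_pos.mpr (pow_pos hp.pos n))), sub_zero]
  · rw [if_neg h]
    have hval : ¬ p ∣ a.val := by
      intro hd
      exact h (by
        obtain ⟨c, hc⟩ := hd
        exact ⟨(c : ZMod (p ^ n)), by
          conv_lhs => rw [← ZMod.natCast_zmod_val a]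
          rw [hc]; push_cast; ring⟩)
    have hu : IsUnit a := by
      rw [← ZMod.natCast_zmod_val a]
      exact (ZMod.isUnit_iff_coprime _ _).mpr
        (Nat.Coprime.pow_right n (Nat.coprime_comm.mp (hp.coprime_iff_not_dvd.mpr hval)))
    obtain ⟨u, rfl⟩ := hu
    have : u ^ (Nat.totient (p ^ n)) = 1 := ZMod.pow_totient u
    rw [mul_comm, pow_mul, ← Units.val_pow_eq_pow_val, this]
    simp


def polyFuns (R : Type*) [CommSemiring R] : Submodule R (R → R) where
  carrier := {f | ∃ g : Polynomial R, ∀ x, f x = g.eval x}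
  add_mem' := by
    rintro a b ⟨g1, h1⟩ ⟨g2, h2⟩
    exact ⟨g1 + g2, fun x => by simp [h1, h2]⟩
  zero_mem' := ⟨0, fun x => by simp⟩
  smul_mem' := by
    rintro c a ⟨g, h⟩
    exact ⟨C c * g, fun x => by simp [h x]⟩


lemma mono_mem {p n : ℕ} (hp : p.Prime) (hn : 0 < n) (d : ℕ) :
    (fun x : ZMod (p ^ n) => x ^ d) ∈ Submodule.span (ZMod (p ^ n))
        {h : ZMod (p ^ n) → ZMod (p ^ n) |
          ∃ k : ℕ, k ≤ n - 1 ∧ ∃ j : ZMod (p ^ n),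
            h = fun i =>
              if i + j ∈ Ideal.span {(p : ZMod (p ^ n))} then (i + j) ^ k else 0} := by
  haveI : NeZero (p ^ n) := ⟨pow_ne_zero n hp.ne_zero⟩
  haveI : NeZero p := ⟨hp.ne_zero⟩
  have key : (fun x : ZMod (p ^ n) => x ^ d) = ∑ r ∈ range p, ∑ k ∈ range n,
      (if k ≤ d then ((d.choose k : ZMod (p ^ n)) * ((r : ZMod (p ^ n)) ^ (d - k))) else 0) •
        (fun i : ZMod (p ^ n) =>
          if i + (-(r : ZMod (p ^ n))) ∈ Ideal.span {(p : ZMod (p ^ n))}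
          then (i + (-(r : ZMod (p ^ n)))) ^ k else 0) := by
    funext x
    simp only [Finset.sum_apply, Pi.smul_apply, smul_eq_mul, Ideal.mem_span_singleton]
    set r0 : ℕ := (psi p n hn x).val with hr0def
    have hr0 : r0 < p := ZMod.val_lt _
    set t : ZMod (p ^ n) := x + -(r0 : ZMod (p ^ n)) with htdef
    have hpsit : psi p n hn t = 0 := by
      rw [htdef, map_add, map_neg, map_natCast, hr0def, ZMod.natCast_zmod_val, add_neg_cancel]
    have hdvd : (p : ZMod (p ^ n)) ∣ t := (dvd_iff hp hn t).mpr hpsit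
    rw [Finset.sum_eq_single_of_mem r0 (mem_range.mpr hr0)]
    · -- main term
      have hx : x = t + (r0 : ZMod (p ^ n)) := by rw [htdef]; ring
      conv_lhs => rw [hx, add_pow]
      set M := max (d + 1) n with hM
      have h1 : ∑ k ∈ range (d + 1), t ^ k * (r0 : ZMod (p ^ n)) ^ (d - k) * (d.choose k : ZMod (p ^ n))
          = ∑ k ∈ range M, t ^ k * (r0 : ZMod (p ^ n)) ^ (d - k) * (d.choose k : ZMod (p ^ n)) := by
        apply Finset.sum_subset (Finset.range_subset_range.mpr (le_max_left _ _))
        intro k _ hk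
        have : d < k := by simp only [mem_range] at hk; omega
        simp [Nat.choose_eq_zero_of_lt this]
      have h2 : ∑ k ∈ range n,
            (if k ≤ d then ((d.choose k : ZMod (p ^ n)) * ((r0 : ZMod (p ^ n)) ^ (d - k))) else 0) *
              (if (p : ZMod (p ^ n)) ∣ t then t ^ k else 0)
          = ∑ k ∈ range M,
            (if k ≤ d then ((d.choose k : ZMod (p ^ n)) * ((r0 : ZMod (p ^ n)) ^ (d - k))) else 0) *
              (if (p : ZMod (p ^ n)) ∣ t then t ^ k else 0) := by
        apply Finset.sum_subset (Finset.range_subset_range.mpr (le_max_right _ _))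
        intro k _ hk
        have hnk : n ≤ k := by simp only [mem_range] at hk; omega
        rw [if_pos hdvd, pow_eq_zero_of_le hp hdvd hnk, mul_zero]
      rw [h1, h2]
      apply Finset.sum_congr rfl
      intro k _
      rw [if_pos hdvd]
      by_cases hkd : k ≤ d
      · rw [if_pos hkd]; ring
      · rw [if_neg hkd, Nat.choose_eq_zero_of_lt (lt_of_not_ge hkd)]
        simp
    · -- other terms
      intro r hr hne
      apply Finset.sum_eq_zero
      intro k _
      have hnd : ¬ (p : ZMod (p ^ n)) ∣ x + -(r : ZMod (p ^ n)) := by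
        intro hd
        have h0 : psi p n hn (x + -(r : ZMod (p ^ n))) = 0 := (dvd_iff hp hn _).mp hd
        rw [map_add, map_neg, map_natCast] at h0
        have : (r : ZMod p) = psi p n hn x := by linear_combination -h0
        apply hne
        rw [← ZMod.val_cast_of_lt (mem_range.mp hr), this, hr0def]
      rw [if_neg hnd, mul_zero]
  rw [key]
  apply Submodule.sum_mem
  intro r _
  apply Submodule.sum_mem
  intro k hk
  exact Submodule.smul_mem _ _ (Submodule.subset_span
    ⟨k, by simp only [mem_range] at hk; omega, -(r : ZMod (p ^ n)), rfl⟩)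


end PolyFunAux

open scoped Classical in
theorem poly_fun_iff_in_span_shifts (p n : ℕ) (hp : p.Prime) (hn : 0 < n)
    (f : ZMod (p ^ n) → ZMod (p ^ n)) :
    (∃ g : Polynomial (ZMod (p ^ n)), ∀ x, f x = g.eval x) ↔
      f ∈ Submodule.span (ZMod (p ^ n))
        {h : ZMod (p ^ n) → ZMod (p ^ n) |
          ∃ k : ℕ, k ≤ n - 1 ∧ ∃ j : ZMod (p ^ n),
            h = fun i =>
              if i + j ∈ Ideal.span {(p : ZMod (p ^ n))} then (i + j) ^ k else 0} := by
  constructor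
  · rintro ⟨g, hg⟩
    have hf : f = fun x => g.eval x := funext hg
    have hsum : (fun x => g.eval x) =
        ∑ i ∈ range (g.natDegree + 1), g.coeff i • (fun x : ZMod (p ^ n) => x ^ i) := by
      funext x
      simp only [Finset.sum_apply, Pi.smul_apply, smul_eq_mul]
      exact Polynomial.eval_eq_sum_range x
    rw [hf, hsum]
    exact Submodule.sum_mem _ fun i _ => Submodule.smul_mem _ _ (PolyFunAux.mono_mem hp hn i)
  · intro hf
    have hle : Submodule.span (ZMod (p ^ n))
        {h : ZMod (p ^ n) → ZMod (p ^ n) |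
          ∃ k : ℕ, k ≤ n - 1 ∧ ∃ j : ZMod (p ^ n),
            h = fun i =>
              if i + j ∈ Ideal.span {(p : ZMod (p ^ n))} then (i + j) ^ k else 0}
        ≤ PolyFunAux.polyFuns (ZMod (p ^ n)) := by
      rw [Submodule.span_le]
      rintro h ⟨k, hk, j, rfl⟩
      refine ⟨(X + C j) ^ k * (1 - (X + C j) ^ (n * Nat.totient (p ^ n))), fun x => ?_⟩
      simp only [eval_mul, eval_pow, eval_add, eval_X, eval_C, eval_sub, eval_one,
        Ideal.mem_span_singleton, PolyFunAux.indicator hp hn (x + j)]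
      by_cases hd : (p : ZMod (p ^ n)) ∣ x + j <;> simp [hd]
    exact hle hf
end

section
/- Let p be a prime and n a positive integer. A function f : Z_{p^n} → Z_{p^n} is a polynomial function if and only if there exist scalars α_{k,j} in Z_{p^n}, for 0 ≤ k ≤ n−1 and 0 ≤ j ≤ p−1, such that f = Σ_{k=0}^{n−1} Σ_{j=0}^{p−1} α_{k,j} · u_k^{<j>} (pointwise); that is, the first p cyclic shifts of u_0, …, u_{n−1} already generate the submodule of polynomial functions, so every polynomial function is a linear combination of at most np of these generators. -/
/-!
Every `x : ZMod (p ^ n)` has exactly one shift `x + j` with `0 ≤ j < p` divisible by `p`, and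
`(x + j) ^ n = 0`; so `g x = (g ∘ (X - j)) (x + j)` only sees the coefficients of
`g ∘ (X - j)` of degree `< n`, which gives the coefficients `α k j`. Conversely `u_k` is itself
polynomial, namely `y ↦ y ^ k - y ^ (k + φ (p ^ n) * n)`: the subtracted power vanishes on
multiples of `p` (nilpotent of index `n`) and equals `y ^ k` on units (Euler's theorem).
-/

open Polynomial Finset

namespace Polynomial

theorem eval_eq_sum_range_of_pow_eq_zero {R : Type*} [Semiring R] (g : R[X]) {y : R} {n : ℕ}
    (hy : y ^ n = 0) : g.eval y = ∑ k ∈ range n, g.coeff k * y ^ k := by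
  rw [eval_eq_sum_range' (Nat.lt_of_lt_of_le (Nat.lt_succ_self _) (le_max_right n _)),
    ← sum_range_add_sum_Ico _ (le_max_left n _),
    sum_eq_zero (s := Ico n _) fun k hk => by rw [pow_eq_zero_of_le (mem_Ico.1 hk).1 hy, mul_zero],
    add_zero]

end Polynomial

namespace ZMod

theorem natCast_dvd_iff_castHom_eq_zero {m N : ℕ} (h : m ∣ N) (x : ZMod N) :
    (m : ZMod N) ∣ x ↔ castHom h (ZMod m) x = 0 := by
  constructor
  · intro hx
    simpa using map_dvd (castHom h (ZMod m)) hx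
  · intro hx
    rw [castHom_apply, ← intCast_zmod_cast x, cast_intCast h, intCast_zmod_eq_zero_iff_dvd] at hx
    simpa using map_dvd (Int.castRingHom (ZMod N)) hx

theorem pow_eq_zero_of_natCast_dvd {m n : ℕ} {y : ZMod (m ^ n)} (hy : (m : ZMod (m ^ n)) ∣ y) :
    y ^ n = 0 := by
  obtain ⟨c, rfl⟩ := hy
  rw [mul_pow, ← Nat.cast_pow, natCast_self, zero_mul]

theorem isUnit_iff_not_natCast_dvd {p n : ℕ} (hp : p.Prime) (hn : 0 < n) (x : ZMod (p ^ n)) :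
    IsUnit x ↔ ¬ (p : ZMod (p ^ n)) ∣ x := by
  have : NeZero (p ^ n) := ⟨pow_ne_zero n hp.ne_zero⟩
  constructor
  · exact fun hx hpx => prime_natCast_not_isUnit_pow hp hn (isUnit_of_dvd_unit hpx hx)
  · intro hx
    rw [← natCast_zmod_val x, isUnit_natCast_iff_not_dvd_pow hp hn]
    exact fun hpx => hx (by simpa using Nat.cast_dvd_cast (α := ZMod (p ^ n)) hpx)

theorem natCast_dvd_add_natCast_iff {m N : ℕ} (h : m ∣ N) (i : ZMod N) {j : ℕ} (hj : j < m) :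
    (m : ZMod N) ∣ i + j ↔ j = (-castHom h (ZMod m) i).val := by
  have : NeZero m := ⟨by omega⟩
  rw [natCast_dvd_iff_castHom_eq_zero h, map_add, map_natCast, add_eq_zero_iff_eq_neg']
  constructor
  · intro hj'
    rw [← hj', val_cast_of_lt hj]
  · rintro rfl
    exact natCast_zmod_val _

theorem sum_range_ite_natCast_dvd_add {M : Type*} [AddCommMonoid M] {m N : ℕ} [NeZero m]
    (h : m ∣ N) (i : ZMod N) [∀ j : ℕ, Decidable ((m : ZMod N) ∣ i + j)] (F : ℕ → M) :
    ∑ j ∈ range m, (if (m : ZMod N) ∣ i + j then F j else 0) =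
      F (-castHom h (ZMod m) i).val := by
  rw [sum_congr rfl fun j hj =>
      if_congr (natCast_dvd_add_natCast_iff h i (mem_range.1 hj)) rfl rfl,
    sum_ite_eq', if_pos (mem_range.2 (val_lt _))]

theorem pow_sub_pow_add_totient_mul_eq_ite {p n : ℕ} (hp : p.Prime) (hn : 0 < n)
    (y : ZMod (p ^ n)) [Decidable ((p : ZMod (p ^ n)) ∣ y)] (k : ℕ) :
    y ^ k - y ^ (k + (p ^ n).totient * n) = if (p : ZMod (p ^ n)) ∣ y then y ^ k else 0 := by
  split_ifs with hy
  · have hle : n ≤ (p ^ n).totient * n :=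
      Nat.le_mul_of_pos_left n (Nat.totient_pos.2 (pow_pos hp.pos n))
    rw [pow_add, pow_eq_zero_of_le hle (pow_eq_zero_of_natCast_dvd hy), mul_zero, sub_zero]
  · obtain ⟨u, rfl⟩ := (isUnit_iff_not_natCast_dvd hp hn y).2 hy
    rw [pow_add, pow_mul, ← Units.val_pow_eq_pow_val u (p ^ n).totient, pow_totient,
      Units.val_one, one_pow, mul_one, sub_self]

end ZMod

open scoped Classical in
theorem poly_fun_iff_combination_of_first_p_shifts (p n : ℕ) (hp : p.Prime) (hn : 0 < n)
    (f : ZMod (p ^ n) → ZMod (p ^ n)) :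
    (∃ g : Polynomial (ZMod (p ^ n)), ∀ x, f x = g.eval x) ↔
      ∃ α : ℕ → ℕ → ZMod (p ^ n),
        f = ∑ k ∈ Finset.range n, ∑ j ∈ Finset.range p,
          α k j • (fun i : ZMod (p ^ n) =>
            if i + (j : ZMod (p ^ n)) ∈ Ideal.span {(p : ZMod (p ^ n))}
            then (i + (j : ZMod (p ^ n))) ^ k else 0) := by
  have : NeZero p := ⟨hp.ne_zero⟩
  have hpn : p ∣ p ^ n := dvd_pow_self p hn.ne'
  simp only [Ideal.mem_span_singleton]
  constructor
  · rintro ⟨g, hg⟩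
    refine ⟨fun k j => (g.comp (X - C (j : ZMod (p ^ n)))).coeff k, funext fun i => ?_⟩
    set j₀ := (-ZMod.castHom hpn (ZMod p) i).val
    have hdvd : (p : ZMod (p ^ n)) ∣ i + j₀ :=
      (ZMod.natCast_dvd_add_natCast_iff hpn i (ZMod.val_lt _)).2 rfl
    simp only [Finset.sum_apply, Pi.smul_apply, smul_eq_mul, mul_ite, mul_zero,
      ZMod.sum_range_ite_natCast_dvd_add hpn i]
    rw [← eval_eq_sum_range_of_pow_eq_zero _ (ZMod.pow_eq_zero_of_natCast_dvd hdvd), hg,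
      eval_comp, eval_sub, eval_X, eval_C, add_sub_cancel_right]
  · rintro ⟨α, rfl⟩
    refine ⟨∑ k ∈ range n, ∑ j ∈ range p, C (α k j) *
      ((X + C (j : ZMod (p ^ n))) ^ k - (X + C (j : ZMod (p ^ n))) ^ (k + (p ^ n).totient * n)),
      fun x => ?_⟩
    simp [eval_finsetSum, ZMod.pow_sub_pow_add_totient_mul_eq_ite hp hn]
end

section
/- Let p be a prime and n a positive integer. A function f : Z_{p^n} → Z_{p^n} is a polynomial function if and only if there exist functions Φ_0, Φ_1, …, Φ_{n−1} : Z_{p^n} → Z_{p^n} such that for all x and s in Z_{p^n}, f(x + s·p) = Φ_0(x) + (s·p)·Φ_1(x) + (s·p)^2·Φ_2(x) + … + (s·p)^{n−1}·Φ_{n−1}(x) in Z_{p^n}. -/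
open Polynomial Finset

section helpers
variable {p n : ℕ}

lemma mulp_pow_eq_zero (s : ZMod (p ^ n)) {i : ℕ} (hi : n ≤ i) :
    (s * p) ^ i = 0 := by
  rw [mul_pow]
  have : ((p : ZMod (p ^ n)) ^ i) = ((p ^ i : ℕ) : ZMod (p ^ n)) := by push_cast; ring
  rw [this, (ZMod.natCast_eq_zero_iff _ _).2 (pow_dvd_pow p hi), mul_zero]

lemma isUnit_of_not_dvd_val (hp : p.Prime) (y : ZMod (p ^ n)) (h : ¬ p ∣ y.val) :
    IsUnit y := by
  haveI : NeZero (p ^ n) := ⟨(pow_pos hp.pos n).ne'⟩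
  rw [← ZMod.natCast_zmod_val y, ZMod.isUnit_iff_coprime]
  exact Nat.Coprime.pow_right _ ((Nat.coprime_comm.1 (hp.coprime_iff_not_dvd.2 h)))

lemma exists_mul_p (hp : p.Prime) (y : ZMod (p ^ n)) (h : p ∣ y.val) :
    ∃ s : ZMod (p ^ n), y = s * p := by
  haveI : NeZero (p ^ n) := ⟨(pow_pos hp.pos n).ne'⟩
  refine ⟨((y.val / p : ℕ) : ZMod (p ^ n)), ?_⟩
  have : ((y.val / p : ℕ) : ZMod (p ^ n)) * p = ((y.val / p * p : ℕ) : ZMod (p ^ n)) := by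
    push_cast; ring
  rw [this, Nat.div_mul_cancel h, ZMod.natCast_zmod_val]

lemma pow_totient_eq_one {y : ZMod (p ^ n)} (h : IsUnit y) :
    y ^ (p ^ n).totient = 1 := by
  obtain ⟨u, rfl⟩ := h
  rw [← Units.val_pow_eq_pow_val, ZMod.pow_totient, Units.val_one]

end helpers

theorem carlitz_characterization (p n : ℕ) (hp : p.Prime) (hn : 0 < n)
    (f : ZMod (p ^ n) → ZMod (p ^ n)) :
    (∃ g : Polynomial (ZMod (p ^ n)), ∀ x, f x = g.eval x) ↔
      ∃ Φ : ℕ → (ZMod (p ^ n) → ZMod (p ^ n)),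
        ∀ x s : ZMod (p ^ n),
          f (x + s * p) = ∑ i ∈ Finset.range n, (s * p) ^ i * Φ i x := by
  haveI : NeZero (p ^ n) := ⟨(pow_pos hp.pos n).ne'⟩
  haveI : NeZero p := ⟨hp.pos.ne'⟩
  constructor
  · rintro ⟨g, hg⟩
    refine ⟨fun i x => (hasseDeriv i g).eval x, fun x s => ?_⟩
    set t := s * (p : ZMod (p ^ n)) with ht
    set h := taylor x g with hh
    set N := max n (h.natDegree + 1) with hN
    have e0 : f (x + t) = h.eval t := by
      rw [hg, hh, taylor_eval, add_comm]
    have e1 : h.eval t = ∑ i ∈ range N, h.coeff i * t ^ i := by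
      rw [eval_eq_sum_range]
      refine Finset.sum_subset (Finset.range_subset_range.2 (le_max_right _ _)) ?_
      intro i _ hi
      rw [coeff_eq_zero_of_natDegree_lt, zero_mul]
      have := Finset.mem_range.not.1 hi
      omega
    have e2 : ∑ i ∈ range N, h.coeff i * t ^ i = ∑ i ∈ range n, h.coeff i * t ^ i := by
      refine (Finset.sum_subset (Finset.range_subset_range.2 (le_max_left _ _)) ?_).symm
      intro i _ hi
      rw [ht, mulp_pow_eq_zero s (by simpa using Finset.mem_range.not.1 hi), mul_zero]
    rw [e0, e1, e2]
    refine Finset.sum_congr rfl fun i _ => ?_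
    rw [mul_comm, hh, taylor_coeff]
  · rintro ⟨Φ, hΦ⟩
    set m := n * (p ^ n).totient with hm
    have hmn : n ≤ m := Nat.le_mul_of_pos_right n (Nat.totient_pos.2 (pow_pos hp.pos n))
    refine ⟨∑ a ∈ range p, (1 - (X - C ((a : ℕ) : ZMod (p ^ n))) ^ m) *
        ∑ i ∈ range n, C (Φ i ((a : ℕ) : ZMod (p ^ n))) * (X - C ((a : ℕ) : ZMod (p ^ n))) ^ i,
      fun x => ?_⟩
    rw [eval_finset_sum]
    simp only [eval_mul, eval_sub, eval_one, eval_pow, eval_X, eval_C, eval_finset_sum]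
    set a₀ := x.val % p with ha₀
    have ha₀p : a₀ < p := Nat.mod_lt _ hp.pos
    rw [Finset.sum_eq_single a₀]
    · have hdvd : p ∣ (x - ((a₀ : ℕ) : ZMod (p ^ n))).val := by
        rw [← ZMod.natCast_eq_zero_iff]
        have h1 : ((x - ((a₀ : ℕ) : ZMod (p ^ n))).val : ZMod p) =
            ZMod.castHom (dvd_pow_self p hn.ne') (ZMod p) (x - ((a₀ : ℕ) : ZMod (p ^ n))) := by
          rw [ZMod.castHom_apply, ZMod.natCast_val]
        have h2 : (ZMod.castHom (dvd_pow_self p hn.ne') (ZMod p)) x = ((x.val : ℕ) : ZMod p) := by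
          rw [ZMod.castHom_apply, ZMod.natCast_val]
        rw [h1, map_sub, map_natCast, h2, ha₀, ZMod.natCast_mod, sub_self]
      obtain ⟨s, hs⟩ := exists_mul_p hp _ hdvd
      rw [hs, mulp_pow_eq_zero s hmn, sub_zero, one_mul]
      have hx : x = ((a₀ : ℕ) : ZMod (p ^ n)) + s * p := by
        rw [← hs]; ring
      rw [hx, hΦ]
      exact Finset.sum_congr rfl fun i _ => mul_comm _ _
    · intro b hb hne
      have hbp := Finset.mem_range.1 hb
      have hunit : IsUnit (x - ((b : ℕ) : ZMod (p ^ n))) := by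
        refine isUnit_of_not_dvd_val hp _ fun hdvd => hne ?_
        have h1 : ((x - ((b : ℕ) : ZMod (p ^ n))).val : ZMod p) =
            ZMod.castHom (dvd_pow_self p hn.ne') (ZMod p) (x - ((b : ℕ) : ZMod (p ^ n))) := by
          rw [ZMod.castHom_apply, ZMod.natCast_val]
        have h2 : (ZMod.castHom (dvd_pow_self p hn.ne') (ZMod p)) x = ((x.val : ℕ) : ZMod p) := by
          rw [ZMod.castHom_apply, ZMod.natCast_val]
        have h0 : ((x - ((b : ℕ) : ZMod (p ^ n))).val : ZMod p) = 0 :=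
          (ZMod.natCast_eq_zero_iff _ _).2 hdvd
        rw [h1, map_sub, map_natCast, h2, sub_eq_zero] at h0
        have := congrArg ZMod.val h0
        rwa [ZMod.val_natCast, ZMod.val_natCast, Nat.mod_eq_of_lt hbp, eq_comm] at this
      rw [hm, mul_comm n, pow_mul, pow_totient_eq_one hunit, one_pow, sub_self, zero_mul]
    · intro h; exact absurd (Finset.mem_range.2 ha₀p) h
end

section
/- Let p be a prime, n a positive integer, k an integer with 0 ≤ k ≤ n−1, and j an element of Z_{p^n}. The polynomial (x+j)^k·(1 − (x+j)^{φ(p^n)}) in Z_{p^n}[x], where φ(p^n) = p^n − p^{n−1}, represents the cyclic shift u_k^{<j>}; that is, for every x in Z_{p^n}, its evaluation at x equals u_k(x + j), where u_k(y) = y^k if p divides y and u_k(y) = 0 otherwise. -/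
/-! Evaluating at `x` gives `y ^ k * (1 - y ^ φ(p ^ n))` with `y = x + j`. If `p ∤ y` then `y` is a
unit and Euler's theorem makes the second factor vanish. If `p ∣ y` then `y ^ n = 0`, and since
`n ≤ φ(p ^ n)` the second factor is `1`. -/

open Nat

theorem Nat.totient_prime_pow_eq_sub {p n : ℕ} (hp : p.Prime) (hn : 0 < n) :
    φ (p ^ n) = p ^ n - p ^ (n - 1) := by
  obtain ⟨m, rfl⟩ := Nat.exists_eq_add_of_lt hn
  rw [zero_add, totient_prime_pow_succ hp, Nat.add_sub_cancel, pow_succ, Nat.mul_sub_one]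

theorem Nat.le_totient_prime_pow {p : ℕ} (hp : p.Prime) (n : ℕ) : n ≤ φ (p ^ n) := by
  cases n with
  | zero => simp
  | succ m =>
    rw [totient_prime_pow_succ hp]
    calc m + 1 ≤ p ^ m := Nat.lt_pow_self hp.one_lt
      _ ≤ p ^ m * (p - 1) := Nat.le_mul_of_pos_right _ (Nat.sub_pos_of_lt hp.one_lt)

theorem ZMod.pow_totient_of_isUnit_s13 {n : ℕ} {x : ZMod n} (hx : IsUnit x) : x ^ φ n = 1 := by
  obtain ⟨u, rfl⟩ := hx
  rw [← Units.val_pow_eq_pow_val, ZMod.pow_totient, Units.val_one]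

theorem ZMod.isUnit_of_notMem_span_prime_s13 {p n : ℕ} (hp : p.Prime) {y : ZMod (p ^ n)}
    (hy : y ∉ Ideal.span {(p : ZMod (p ^ n))}) : IsUnit y := by
  have : NeZero (p ^ n) := ⟨pow_ne_zero n hp.ne_zero⟩
  have hndvd : ¬ p ∣ y.val := by
    rintro ⟨m, hm⟩
    refine hy (Ideal.mem_span_singleton.mpr ⟨m, ?_⟩)
    rw [← ZMod.natCast_zmod_val y, hm, Nat.cast_mul]
  rw [← ZMod.natCast_zmod_val y, ZMod.isUnit_iff_coprime]
  exact ((hp.coprime_iff_not_dvd.mpr hndvd).symm).pow_right n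

theorem ZMod.pow_eq_zero_of_mem_span_prime {p n : ℕ} {y : ZMod (p ^ n)}
    (hy : y ∈ Ideal.span {(p : ZMod (p ^ n))}) : y ^ n = 0 := by
  obtain ⟨c, rfl⟩ := Ideal.mem_span_singleton.mp hy
  rw [mul_pow, ← Nat.cast_pow, ZMod.natCast_self, zero_mul]

theorem ZMod.pow_totient_eq_zero_of_mem_span_prime {p n : ℕ} (hp : p.Prime) {y : ZMod (p ^ n)}
    (hy : y ∈ Ideal.span {(p : ZMod (p ^ n))}) : y ^ φ (p ^ n) = 0 :=
  pow_eq_zero_of_le (Nat.le_totient_prime_pow hp n) (ZMod.pow_eq_zero_of_mem_span_prime hy)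

open scoped Classical in
theorem poly_for_uk_shift_general (p n k : ℕ) (hp : p.Prime) (hn : 0 < n)
    (j : ZMod (p ^ n)) :
    ∀ x : ZMod (p ^ n),
      ((Polynomial.X + Polynomial.C j) ^ k *
          (1 - (Polynomial.X + Polynomial.C j) ^ (p ^ n - p ^ (n - 1))) :
          Polynomial (ZMod (p ^ n))).eval x =
        if x + j ∈ Ideal.span {(p : ZMod (p ^ n))} then (x + j) ^ k else 0 := by
  intro x
  rw [← Nat.totient_prime_pow_eq_sub hp hn]
  simp only [Polynomial.eval_mul, Polynomial.eval_sub, Polynomial.eval_one,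
    Polynomial.eval_pow, Polynomial.eval_add, Polynomial.eval_X, Polynomial.eval_C]
  split_ifs with h
  · rw [ZMod.pow_totient_eq_zero_of_mem_span_prime hp h, sub_zero, mul_one]
  · rw [ZMod.pow_totient_of_isUnit_s13 (ZMod.isUnit_of_notMem_span_prime_s13 hp h), sub_self, mul_zero]

open scoped Classical in
theorem poly_for_uk_shift (p n k : ℕ) (hp : p.Prime) (hn : 0 < n) (hk : k ≤ n - 1)
    (j : ZMod (p ^ n)) :
    ∀ x : ZMod (p ^ n),
      ((Polynomial.X + Polynomial.C j) ^ k *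
          (1 - (Polynomial.X + Polynomial.C j) ^ (p ^ n - p ^ (n - 1))) :
          Polynomial (ZMod (p ^ n))).eval x =
        if x + j ∈ Ideal.span {(p : ZMod (p ^ n))} then (x + j) ^ k else 0 :=
  poly_for_uk_shift_general p n k hp hn j
end

section
/- Let p be a prime and n, m positive integers. A function f : (Z_{p^n})^m → Z_{p^n} is a polynomial function if and only if f lies in the Z_{p^n}-submodule of the module of all functions (Z_{p^n})^m → Z_{p^n} generated by the cyclic shifts u_{k_1,…,k_m}^{<j_1,…,j_m>} taken over all tuples of nonnegative integers (k_1,…,k_m) with k_1 + … + k_m < n and all (j_1,…,j_m) in (Z_{p^n})^m, where u_{k_1,…,k_m}(x_1,…,x_m) = x_1^{k_1}·…·x_m^{k_m} if p divides every x_i and 0 otherwise, and u_{k_1,…,k_m}^{<j_1,…,j_m>}(x_1,…,x_m) = u_{k_1,…,k_m}(x_1 + j_1, …, x_m + j_m). -/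
open scoped Classical

lemma aux_mem_span_iff (p n : ℕ) (hp : p.Prime) (hn : 0 < n) (z : ZMod (p^n)) :
    z ∈ Ideal.span {(p : ZMod (p ^ n))} ↔
      (ZMod.castHom (dvd_pow_self p hn.ne') (ZMod p)) z = 0 := by
  haveI : NeZero (p^n) := ⟨(pow_pos hp.pos n).ne'⟩
  rw [Ideal.mem_span_singleton]
  constructor
  · rintro ⟨t, rfl⟩
    rw [map_mul, map_natCast, ZMod.natCast_self, zero_mul]
  · intro h
    have hv : (p:ℕ) ∣ z.val := by
      have : ((z.val : ℕ) : ZMod p) = 0 := by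
        rwa [ZMod.castHom_apply, ZMod.cast_eq_val] at h
      exact (ZMod.natCast_eq_zero_iff _ _).mp this
    obtain ⟨s, hs⟩ := hv
    refine ⟨(s : ZMod (p^n)), ?_⟩
    have : ((z.val : ℕ) : ZMod (p^n)) = z := ZMod.natCast_rightInverse z
    rw [← this, hs]
    push_cast
    ring

lemma aux_pow_eq (p n : ℕ) (hp : p.Prime) (hn : 0 < n) (z : ZMod (p^n)) :
    z ^ (n * Nat.totient (p^n)) = if z ∈ Ideal.span {(p : ZMod (p ^ n))} then 0 else 1 := by
  haveI : NeZero (p^n) := ⟨(pow_pos hp.pos n).ne'⟩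
  split_ifs with h
  · rw [Ideal.mem_span_singleton] at h
    obtain ⟨t, rfl⟩ := h
    have hzn : ((p : ZMod (p^n)) * t) ^ n = 0 := by
      rw [mul_pow, ← Nat.cast_pow, ZMod.natCast_self, zero_mul]
    rw [pow_mul, hzn, zero_pow (Nat.totient_pos.mpr (pow_pos hp.pos n)).ne']
  · have hv : ¬ (p:ℕ) ∣ z.val := by
      intro hd
      apply h
      rw [Ideal.mem_span_singleton]
      obtain ⟨s, hs⟩ := hd
      refine ⟨(s : ZMod (p^n)), ?_⟩
      have : ((z.val : ℕ) : ZMod (p^n)) = z := ZMod.natCast_rightInverse z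
      rw [← this, hs]; push_cast; ring
    have hco : z.val.Coprime (p^n) :=
      Nat.Coprime.pow_right n ((Nat.coprime_comm).mp (hp.coprime_iff_not_dvd.mpr hv))
    have hu : IsUnit z := by
      have : ((z.val : ℕ) : ZMod (p^n)) = z := ZMod.natCast_rightInverse z
      rw [← this]
      exact (ZMod.isUnit_iff_coprime _ _).mpr hco
    obtain ⟨u, rfl⟩ := hu
    rw [pow_mul]
    norm_cast
    rw [ZMod.pow_totient, Units.val_one]

/-- monomials of total degree ≥ n vanish on vectors all of whose entries are divisible by p -/
lemma aux_prod_zero (p n m : ℕ) (hp : p.Prime) (y : Fin m → ZMod (p^n)) (d : Fin m → ℕ)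
    (hy : ∀ i, y i ∈ Ideal.span {(p : ZMod (p ^ n))}) (hd : n ≤ ∑ i, d i) :
    ∏ i, y i ^ d i = 0 := by
  choose t ht using fun i => Ideal.mem_span_singleton.mp (hy i)
  have : ∏ i, y i ^ d i = (p : ZMod (p^n)) ^ (∑ i, d i) * ∏ i, t i ^ d i := by
    rw [Finset.prod_congr rfl (fun i _ => by rw [ht i, mul_pow]), Finset.prod_mul_distrib,
      Finset.prod_pow_eq_pow_sum]
  rw [this]
  have hz : (p : ZMod (p^n)) ^ (∑ i, d i) = 0 := by
    obtain ⟨c, hc⟩ := Nat.exists_eq_add_of_le hd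
    rw [hc, pow_add, ← Nat.cast_pow, ZMod.natCast_self, zero_mul]
  rw [hz, zero_mul]

/-- the generators are polynomial functions -/
lemma aux_gen_poly (p n m : ℕ) (hp : p.Prime) (hn : 0 < n) (k : Fin m → ℕ)
    (j : Fin m → ZMod (p^n)) :
    ∃ g : MvPolynomial (Fin m) (ZMod (p ^ n)), ∀ x,
      (if ∀ i, x i + j i ∈ Ideal.span {(p : ZMod (p ^ n))}
        then ∏ i, (x i + j i) ^ k i else 0) = MvPolynomial.eval x g := by
  set N := n * Nat.totient (p^n)
  refine ⟨∏ i, ((MvPolynomial.X i + MvPolynomial.C (j i)) ^ k i *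
      (1 - (MvPolynomial.X i + MvPolynomial.C (j i)) ^ N)), fun x => ?_⟩
  rw [map_prod]
  have heval : ∀ i, MvPolynomial.eval x ((MvPolynomial.X i + MvPolynomial.C (j i)) ^ k i *
      (1 - (MvPolynomial.X i + MvPolynomial.C (j i)) ^ N)) =
      (x i + j i) ^ k i * (1 - (x i + j i) ^ N) := by
    intro i; simp
  rw [Finset.prod_congr rfl (fun i _ => heval i)]
  split_ifs with h
  · exact Finset.prod_congr rfl fun i _ => by
      rw [aux_pow_eq p n hp hn, if_pos (h i), sub_zero, mul_one]
  · push_neg at h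
    obtain ⟨i, hi⟩ := h
    refine (Finset.prod_eq_zero (Finset.mem_univ i) ?_).symm
    rw [aux_pow_eq p n hp hn _, if_neg hi, sub_self, mul_zero]

open scoped Classical in
theorem multivariate_poly_fun_iff_in_span_shifts (p n m : ℕ) (hp : p.Prime) (hn : 0 < n)
    (hm : 0 < m) (f : (Fin m → ZMod (p ^ n)) → ZMod (p ^ n)) :
    (∃ g : MvPolynomial (Fin m) (ZMod (p ^ n)), ∀ x, f x = MvPolynomial.eval x g) ↔
      f ∈ Submodule.span (ZMod (p ^ n))
        {h : (Fin m → ZMod (p ^ n)) → ZMod (p ^ n) |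
          ∃ k : Fin m → ℕ, (∑ i, k i) < n ∧ ∃ j : Fin m → ZMod (p ^ n),
            h = fun x =>
              if ∀ i, x i + j i ∈ Ideal.span {(p : ZMod (p ^ n))}
              then ∏ i, (x i + j i) ^ k i else 0} := by
  haveI : NeZero (p ^ n) := ⟨(pow_pos hp.pos n).ne'⟩
  haveI : NeZero p := ⟨hp.pos.ne'⟩
  constructor
  · rintro ⟨g, hg⟩
    set φ := ZMod.castHom (dvd_pow_self p hn.ne') (ZMod p) with hφ
    set a₀ : (Fin m → ZMod (p ^ n)) → (Fin m → Fin p) :=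
      fun x i => ⟨(φ (x i)).val, ZMod.val_lt _⟩ with ha₀
    have hcond : ∀ (a : Fin m → Fin p) (x : Fin m → ZMod (p ^ n)),
        (∀ i, x i + -(((a i : ℕ) : ZMod (p ^ n))) ∈ Ideal.span {(p : ZMod (p ^ n))}) ↔
          a = a₀ x := by
      intro a x
      constructor
      · intro h
        funext i
        have h1 := (aux_mem_span_iff p n hp hn _).mp (h i)
        rw [map_add, map_neg, map_natCast] at h1
        have h2 : ((a i : ℕ) : ZMod p) = φ (x i) :=
          (sub_eq_zero.mp (by rwa [sub_eq_add_neg])).symm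
        apply Fin.ext
        have h3 : ((a i : ℕ) : ZMod p).val = (φ (x i)).val := by rw [h2]
        rwa [ZMod.val_cast_of_lt (a i).isLt] at h3
      · rintro rfl i
        rw [aux_mem_span_iff p n hp hn, map_add, map_neg, map_natCast]
        have h3 : (((a₀ x i : ℕ)) : ZMod p) = φ (x i) := ZMod.natCast_rightInverse _
        rw [h3, add_neg_cancel]
    have hdecomp : f = ∑ a : Fin m → Fin p, (fun x =>
        if (∀ i, x i + -(((a i : ℕ) : ZMod (p ^ n))) ∈ Ideal.span {(p : ZMod (p ^ n))})
        then f x else 0) := by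
      funext x
      rw [Finset.sum_apply]
      rw [Finset.sum_congr rfl (fun a _ => if_congr (hcond a x) rfl rfl)]
      rw [Finset.sum_ite_eq' Finset.univ (a₀ x) (fun _ => f x)]
      simp
    rw [hdecomp]
    apply Submodule.sum_mem
    intro a _
    set c : Fin m → ZMod (p ^ n) := fun i => ((a i : ℕ) : ZMod (p ^ n)) with hc
    set ga := MvPolynomial.bind₁ (fun i => MvPolynomial.X i + MvPolynomial.C (c i)) g with hga
    have hkey : ∀ y : Fin m → ZMod (p ^ n), MvPolynomial.eval y ga =
        MvPolynomial.eval (fun i => y i + c i) g := by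
      intro y
      have := MvPolynomial.eval₂Hom_bind₁ (RingHom.id _) y
        (fun i => MvPolynomial.X i + MvPolynomial.C (c i)) g
      simpa using this
    have heq : (fun x => if (∀ i, x i + -(c i) ∈ Ideal.span {(p : ZMod (p ^ n))})
          then f x else 0)
        = ∑ d ∈ ga.support.filter (fun d => (∑ i, d i) < n),
            (MvPolynomial.coeff d ga) • (fun x =>
              if (∀ i, x i + -(c i) ∈ Ideal.span {(p : ZMod (p ^ n))})
              then ∏ i, (x i + -(c i)) ^ d i else 0) := by
      funext x
      rw [Finset.sum_apply]
      simp only [Pi.smul_apply, smul_eq_mul]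
      by_cases hx : (∀ i, x i + -(c i) ∈ Ideal.span {(p : ZMod (p ^ n))})
      · rw [if_pos hx]
        have h1 : f x = MvPolynomial.eval (fun i => x i + -(c i)) ga := by
          have hxx : (fun i => x i + -c i + c i) = x := by funext i; ring
          rw [hg, hkey, hxx]
        symm
        calc ∑ d ∈ ga.support.filter (fun d => (∑ i, d i) < n),
              MvPolynomial.coeff d ga * (if (∀ i, x i + -(c i) ∈ Ideal.span
                {(p : ZMod (p ^ n))}) then ∏ i, (x i + -(c i)) ^ d i else 0)
            = ∑ d ∈ ga.support.filter (fun d => (∑ i, d i) < n),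
              MvPolynomial.coeff d ga * ∏ i, (x i + -(c i)) ^ d i :=
            Finset.sum_congr rfl (fun d _ => by rw [if_pos hx])
          _ = ∑ d ∈ ga.support, MvPolynomial.coeff d ga * ∏ i, (x i + -(c i)) ^ d i := by
            apply Finset.sum_filter_of_ne
            intro d _ hne
            by_contra hlt
            exact hne (by rw [aux_prod_zero p n m hp _ _ hx (le_of_not_gt hlt), mul_zero])
          _ = MvPolynomial.eval (fun i => x i + -(c i)) ga := (MvPolynomial.eval_eq' _ _).symm
          _ = f x := h1.symm
      · rw [if_neg hx]
        symm
        apply Finset.sum_eq_zero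
        intro d _
        rw [if_neg hx, mul_zero]
    rw [heq]
    apply Submodule.sum_mem
    intro d hd
    apply Submodule.smul_mem
    apply Submodule.subset_span
    exact ⟨fun i => d i, (Finset.mem_filter.mp hd).2, fun i => -(c i), rfl⟩
  · intro hf
    refine Submodule.span_induction ?_ ?_ ?_ ?_ hf
    · rintro h ⟨k, hk, j, rfl⟩
      obtain ⟨g, hgen⟩ := aux_gen_poly p n m hp hn k j
      exact ⟨g, fun x => hgen x⟩
    · exact ⟨0, by simp⟩
    · rintro h1 h2 - - ⟨g1, hg1⟩ ⟨g2, hg2⟩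
      exact ⟨g1 + g2, fun x => by simp [Pi.add_apply, hg1 x, hg2 x]⟩
    · rintro r h - ⟨g, hg⟩
      exact ⟨MvPolynomial.C r * g, fun x => by
        simp [Pi.smul_apply, smul_eq_mul, hg x]⟩
end

section
/- Let t be a composite positive integer (t ≥ 2 and t is not prime). Then Z_t is not polynomially complete: there exists a function f : Z_t → Z_t that is not a polynomial function, i.e., for every polynomial g in Z_t[x] there is some x in Z_t with f(x) not equal to the evaluation of g at x. -/
theorem zmod_composite_not_polynomially_complete (t : ℕ) (ht : 2 ≤ t) (hnp : ¬ t.Prime) :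
    ∃ f : ZMod t → ZMod t, ∀ g : Polynomial (ZMod t), ∃ x, f x ≠ g.eval x := by
  haveI : NeZero t := ⟨by omega⟩
  obtain ⟨d, hdvd, hd2, hdlt⟩ := Nat.exists_dvd_of_not_prime2 ht hnp
  have hd0 : (d : ZMod t) ≠ 0 := by
    intro h'
    rw [ZMod.natCast_eq_zero_iff] at h'
    exact absurd (Nat.le_of_dvd (by omega) h') (by omega)
  -- f is 1 at d, 0 elsewhere
  refine ⟨fun x => if x = (d : ZMod t) then 1 else 0, fun g => ?_⟩
  by_contra h
  push_neg at h
  have h0 : g.eval 0 = 0 := by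
    have := (h 0).symm
    simpa [hd0.symm] using this
  have hd : g.eval (d : ZMod t) = 1 := by
    have := (h (d : ZMod t)).symm
    simpa using this
  have hdvd1 : ((d : ZMod t) - 0) ∣ g.eval (d : ZMod t) - g.eval 0 :=
    Polynomial.sub_dvd_eval_sub _ _ g
  rw [h0, hd, sub_zero, sub_zero] at hdvd1
  obtain ⟨c, hc⟩ := hdvd1
  -- d is a unit, but d * (t/d) = 0 with t/d ≠ 0
  have hq0 : ((t / d : ℕ) : ZMod t) ≠ 0 := by
    intro hq
    rw [ZMod.natCast_eq_zero_iff] at hq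
    have h1 : 0 < t / d := Nat.div_pos (by omega) (by omega)
    have h2 : t / d < t := Nat.div_lt_self (by omega) (by omega)
    exact absurd (Nat.le_of_dvd h1 hq) (by omega)
  have hmul : (d : ZMod t) * ((t / d : ℕ) : ZMod t) = 0 := by
    rw [← Nat.cast_mul, Nat.mul_div_cancel' hdvd, ZMod.natCast_self]
  have : ((t / d : ℕ) : ZMod t) = 0 := by
    calc ((t / d : ℕ) : ZMod t) = 1 * ((t / d : ℕ) : ZMod t) := (one_mul _).symm
      _ = (d : ZMod t) * c * ((t / d : ℕ) : ZMod t) := by rw [← hc]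
      _ = c * ((d : ZMod t) * ((t / d : ℕ) : ZMod t)) := by ring
      _ = 0 := by rw [hmul, mul_zero]
  exact hq0 this
end
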